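/- arXiv:1904.12373 — 3 statements merged into one kernel-verified Lean document; each statement's English description precedes it below -/
import Mathlib

section
/- For every positive integer r, one has (2r/e)^r < (2r)! / (2^r · r!) < √2 · (2r/e)^r, where e is Euler's number. -/
/-!
Write `s n = n! / (√(2n) (n/e)^n)` for the Stirling sequence. A direct computation gives
`(2r)! / (2^r r!) = √2 · (s(2r) / s r) · (2r/e)^r`, so the claim is `1 < √2 · s(2r) / s r < √2`.
The upper bound is the strict decrease of `s` on the positive integers. For the lower bound,
`s` decreases from `s 1 = e/√2` to its limit `√π`, and `e/√2 < √2 · √π` because `e² < 4π`.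
-/

open Real

namespace Stirling

theorem stirlingSeq'_strictAnti : StrictAnti (stirlingSeq ∘ Nat.succ) := by
  refine strictAnti_nat_of_succ_lt fun n => ?_
  have hlog : 0 < log (stirlingSeq (n + 1)) - log (stirlingSeq (n + 2)) :=
    hasSum_lt (f := 0) (i := 0) (fun k => by positivity) (by positivity) hasSum_zero
      (log_stirlingSeq_sdiff_hasSum n)
  exact (log_lt_log_iff (stirlingSeq'_pos _) (stirlingSeq'_pos _)).mp (sub_pos.mp hlog)

theorem stirlingSeq_lt_of_lt {m n : ℕ} (hm : m ≠ 0) (hmn : m < n) :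
    stirlingSeq n < stirlingSeq m := by
  obtain ⟨m, rfl⟩ := Nat.exists_eq_succ_of_ne_zero hm
  obtain ⟨n, rfl⟩ := Nat.exists_eq_succ_of_ne_zero (by omega : n ≠ 0)
  exact stirlingSeq'_strictAnti (Nat.succ_lt_succ_iff.mp hmn)

theorem stirlingSeq_le_stirlingSeq_one {n : ℕ} (hn : n ≠ 0) :
    stirlingSeq n ≤ stirlingSeq 1 := by
  obtain ⟨n, rfl⟩ := Nat.exists_eq_succ_of_ne_zero hn
  exact stirlingSeq'_antitone n.zero_le

theorem exp_one_div_sqrt_two_lt_sqrt_two_mul_sqrt_pi : exp 1 / √2 < √2 * √π := by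
  have he : exp 1 ^ 2 < 4 * π := by
    nlinarith [exp_one_lt_d9, exp_pos 1, pi_gt_three]
  refine lt_of_pow_lt_pow_left₀ 2 (by positivity) ?_
  rw [div_pow, mul_pow, sq_sqrt zero_le_two, sq_sqrt pi_pos.le]
  linarith

theorem stirlingSeq_lt_sqrt_two_mul_stirlingSeq {m n : ℕ} (hm : m ≠ 0) (hn : n ≠ 0) :
    stirlingSeq m < √2 * stirlingSeq n :=
  calc stirlingSeq m ≤ exp 1 / √2 := stirlingSeq_one ▸ stirlingSeq_le_stirlingSeq_one hm
    _ < √2 * √π := exp_one_div_sqrt_two_lt_sqrt_two_mul_sqrt_pi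
    _ ≤ √2 * stirlingSeq n := by gcongr; exact sqrt_pi_le_stirlingSeq hn

theorem factorial_two_mul_div_two_pow_mul_factorial {r : ℕ} (hr : r ≠ 0) :
    ((2 * r).factorial : ℝ) / (2 ^ r * r.factorial) =
      √2 * stirlingSeq (2 * r) / stirlingSeq r * (2 * r / exp 1) ^ r := by
  have hr' : (0 : ℝ) < r := by positivity
  have hsqrt : √(2 * (2 * r : ℝ)) = √2 * √(2 * r) := sqrt_mul zero_le_two _
  have hpow : (2 : ℝ) ^ r * (r / exp 1) ^ r = (2 * r / exp 1) ^ r := by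
    rw [← mul_pow, mul_div_assoc]
  simp only [stirlingSeq, Nat.cast_mul, Nat.cast_ofNat, hsqrt, pow_mul', ← hpow]
  field_simp

end Stirling

open Stirling in
theorem stmt5 (r : ℕ) (hr : 0 < r) :
    (2 * (r : ℝ) / Real.exp 1) ^ r <
        ((2 * r).factorial : ℝ) / (2 ^ r * (r.factorial : ℝ)) ∧
      ((2 * r).factorial : ℝ) / (2 ^ r * (r.factorial : ℝ)) <
        Real.sqrt 2 * (2 * (r : ℝ) / Real.exp 1) ^ r := by
  have hr0 : r ≠ 0 := hr.ne'
  have h2r0 : 2 * r ≠ 0 := by omega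
  have hs : 0 < stirlingSeq r := (sqrt_pos.mpr pi_pos).trans_le (sqrt_pi_le_stirlingSeq hr0)
  have hA : 0 < (2 * (r : ℝ) / exp 1) ^ r := by positivity
  rw [factorial_two_mul_div_two_pow_mul_factorial hr0]
  constructor
  · refine lt_mul_of_one_lt_left hA ((one_lt_div hs).mpr ?_)
    exact stirlingSeq_lt_sqrt_two_mul_stirlingSeq hr0 h2r0
  · refine mul_lt_mul_of_pos_right ?_ hA
    rw [div_lt_iff₀ hs]
    exact mul_lt_mul_of_pos_left (stirlingSeq_lt_of_lt hr0 (by omega)) (by positivity)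
end

section
/- Let p be an odd prime, H ∈ (0,p) a real number, h ≥ 2 an integer, and set X = H/h. For integers 0 ≤ t < q ≤ X with gcd(t,q) = 1, define the intervals I(q,t) = ( tp/q, (tp+H)/q − h + 1 ] and J(q,t) = [ (tp−H)/q, tp/q − h + 1 ). If X ≥ 2 and 2HX < p, then the intervals I(q,t) and J(q,t), over all such pairs (q,t), are pairwise disjoint subsets of [−H, p−H). -/
/-- The Burgess interval `I(q,t) = ( tp/q, (tp+H)/q − h + 1 ]`. -/
def burgessI (p h : ℕ) (H : ℝ) (q t : ℕ) : Set ℝ :=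
  Set.Ioc ((t * p : ℝ) / q) ((t * p + H) / q - h + 1)

/-- The Burgess interval `J(q,t) = [ (tp−H)/q, tp/q − h + 1 )`. -/
def burgessJ (p h : ℕ) (H : ℝ) (q t : ℕ) : Set ℝ :=
  Set.Ico (((t * p : ℝ) - H) / q) ((t * p : ℝ) / q - h + 1)

/-!
Every point of `I(q,t)` lies just above `tp/q` and every point of `J(q,t)` just below it, both
within `H/q`. For distinct reduced fractions `t/q ≠ t'/q'` the centres are at distance at least
`p/(qq')`, whereas overlapping intervals would force a distance of at most
`H/q + H/q' = H(q+q')/(qq') ≤ 2HX/(qq') < p/(qq')`. Containment in `[-H, p-H)` is the same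
size estimate, using `t ≤ q - 1`.
-/

theorem Nat.Coprime.eq_and_eq_of_mul_eq_mul {t q t' q' : ℕ} (hq : 0 < q)
    (hcop : Nat.Coprime t q) (hcop' : Nat.Coprime t' q') (heq : t * q' = t' * q) :
    q = q' ∧ t = t' := by
  have hqq' : q ∣ q' := hcop.symm.dvd_of_dvd_mul_left ⟨t', by rw [heq, mul_comm]⟩
  have hq'q : q' ∣ q := hcop'.symm.dvd_of_dvd_mul_left ⟨t, by rw [← heq, mul_comm]⟩
  obtain rfl := Nat.dvd_antisymm hqq' hq'q
  exact ⟨rfl, Nat.eq_of_mul_eq_mul_right hq heq⟩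

theorem div_mul_le_abs_mul_div_sub_mul_div {p : ℝ} (hp : 0 ≤ p) {t q t' q' : ℕ}
    (hq : 0 < q) (hq' : 0 < q') (hne : t * q' ≠ t' * q) :
    p / (q * q') ≤ |t * p / q - t' * p / q'| := by
  have hqq' : (0 : ℝ) < q * q' := by positivity
  have hgap : (1 : ℝ) ≤ |(t : ℝ) * q' - t' * q| := by
    have : (1 : ℤ) ≤ |(t : ℤ) * q' - t' * q| :=
      Int.one_le_abs (sub_ne_zero.2 (by exact_mod_cast hne))
    exact_mod_cast this
  have hdiff : (t * p : ℝ) / q - t' * p / q' = p * ((t : ℝ) * q' - t' * q) / (q * q') := by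
    field_simp
  rw [hdiff, abs_div, abs_mul, abs_of_pos hqq', abs_of_nonneg hp]
  gcongr
  exact le_mul_of_one_le_right hp hgap

section Burgess

variable {p h : ℕ} {H : ℝ} {q t : ℕ} {z : ℝ}

theorem mem_burgessI (hz : z ∈ burgessI p h H q t) (hh : 1 ≤ h) :
    t * p / q < z ∧ z ≤ t * p / q + H / q := by
  have : (1 : ℝ) ≤ h := by exact_mod_cast hh
  obtain ⟨hlo, hhi⟩ := hz
  rw [add_div] at hhi
  exact ⟨hlo, by linarith⟩

theorem mem_burgessJ (hz : z ∈ burgessJ p h H q t) (hh : 1 ≤ h) :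
    t * p / q - H / q ≤ z ∧ z < t * p / q := by
  have : (1 : ℝ) ≤ h := by exact_mod_cast hh
  obtain ⟨hlo, hhi⟩ := hz
  rw [sub_div] at hlo
  exact ⟨hlo, by linarith⟩

theorem abs_sub_le_of_mem_burgess {b : Bool}
    (hz : z ∈ if b then burgessI p h H q t else burgessJ p h H q t) (hh : 1 ≤ h) :
    |z - t * p / q| ≤ H / q := by
  rw [abs_sub_le_iff]
  cases b
  · have := mem_burgessJ hz hh
    constructor <;> linarith
  · have := mem_burgessI hz hh
    constructor <;> linarith

theorem disjoint_burgessI_burgessJ (hh : 1 ≤ h) :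
    Disjoint (burgessI p h H q t) (burgessJ p h H q t) :=
  Set.disjoint_left.2 fun _ hzI hzJ => (mem_burgessI hzI hh).1.not_gt (mem_burgessJ hzJ hh).2

theorem burgessI_subset_Ico (hH : 0 ≤ H) (hh : 1 ≤ h) (htq : t < q) (hHq : H * (q + 1) < p) :
    burgessI p h H q t ⊆ Set.Ico (-H) (p - H) := by
  intro z hz
  obtain ⟨hlo, hhi⟩ := mem_burgessI hz hh
  have hq : (0 : ℝ) < q := by exact_mod_cast (t.zero_le.trans_lt htq)
  have ht : (t : ℝ) + 1 ≤ q := by exact_mod_cast htq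
  have hcentre : t * p / q + H / q < p - H := by
    rw [← add_div, div_lt_iff₀ hq]
    nlinarith
  exact ⟨by linarith [show (0 : ℝ) ≤ t * p / q by positivity], by linarith⟩

theorem burgessJ_subset_Ico (hH : 0 ≤ H) (hh : 1 ≤ h) (htq : t < q) (hHq : H * q ≤ p) :
    burgessJ p h H q t ⊆ Set.Ico (-H) (p - H) := by
  intro z hz
  obtain ⟨hlo, hhi⟩ := mem_burgessJ hz hh
  have hq : (0 : ℝ) < q := by exact_mod_cast (t.zero_le.trans_lt htq)
  have ht : (t : ℝ) + 1 ≤ q := by exact_mod_cast htq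
  have hlow : -H ≤ t * p / q - H / q := by
    rw [← sub_div, le_div_iff₀ hq]
    nlinarith
  have hhigh : t * p / q ≤ p - H := by
    rw [div_le_iff₀ hq]
    nlinarith
  exact ⟨hlow.trans hlo, by linarith⟩

theorem burgess_disjoint_of_ne {q' t' : ℕ} {b b' : Bool} (hh : 1 ≤ h)
    (hq : 0 < q) (hq' : 0 < q') (hcop : Nat.Coprime t q) (hcop' : Nat.Coprime t' q')
    (hne : (q, t) ≠ (q', t')) (hHq : H * (q + q') < p) :
    Disjoint (if b then burgessI p h H q t else burgessJ p h H q t)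
      (if b' then burgessI p h H q' t' else burgessJ p h H q' t') := by
  refine Set.disjoint_left.2 fun z hz hz' => ?_
  have hcross : t * q' ≠ t' * q := fun heq => by
    obtain ⟨rfl, rfl⟩ := hcop.eq_and_eq_of_mul_eq_mul hq hcop' heq
    exact hne rfl
  have hqR : (0 : ℝ) < q := by exact_mod_cast hq
  have hq'R : (0 : ℝ) < q' := by exact_mod_cast hq'
  have hfar := div_mul_le_abs_mul_div_sub_mul_div (p := p) (Nat.cast_nonneg p) hq hq' hcross
  have hnear : |(t * p / q : ℝ) - t' * p / q'| ≤ H / q + H / q' :=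
    calc |(t * p / q : ℝ) - t' * p / q'| ≤ |(t * p / q : ℝ) - z| + |z - t' * p / q'| :=
          abs_sub_le _ _ _
      _ ≤ H / q + H / q' := by
        rw [abs_sub_comm]
        exact add_le_add (abs_sub_le_of_mem_burgess hz hh) (abs_sub_le_of_mem_burgess hz' hh)
  have hclose : H / q + H / q' < p / (q * q') := by
    rw [div_add_div _ _ hqR.ne' hq'R.ne', div_lt_div_iff_of_pos_right (by positivity)]
    linarith
  exact (hfar.trans hnear).not_gt hclose

end Burgess

theorem stmt11_general (p : ℕ)
    (H : ℝ) (hH0 : 0 < H) (h : ℕ) (hh : 2 ≤ h)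
    (X : ℝ) (hHX : 2 * H * X < p) :
    (∀ q t : ℕ, t < q → (q : ℝ) ≤ X → Nat.gcd t q = 1 →
        burgessI p h H q t ⊆ Set.Ico (-H) ((p : ℝ) - H) ∧
        burgessJ p h H q t ⊆ Set.Ico (-H) ((p : ℝ) - H)) ∧
      Set.PairwiseDisjoint
        {x : ℕ × ℕ × Bool | x.2.1 < x.1 ∧ (x.1 : ℝ) ≤ X ∧ Nat.gcd x.2.1 x.1 = 1}
        (fun x => if x.2.2 then burgessI p h H x.1 x.2.1 else burgessJ p h H x.1 x.2.1) := by
  have hh1 : 1 ≤ h := by omega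
  have hHq : ∀ {q : ℕ}, (q : ℝ) ≤ X → 2 * H * q < p := fun hqX => by
    nlinarith [mul_le_mul_of_nonneg_left hqX hH0.le]
  constructor
  · intro q t htq hqX _
    have hq : (1 : ℝ) ≤ q := by exact_mod_cast (t.zero_le.trans_lt htq)
    have hHqX := hHq hqX
    exact ⟨burgessI_subset_Ico hH0.le hh1 htq (by nlinarith),
      burgessJ_subset_Ico hH0.le hh1 htq (by nlinarith)⟩
  · rintro ⟨q, t, b⟩ ⟨htq, hqX, hcop⟩ ⟨q', t', b'⟩ ⟨htq', hqX', hcop'⟩ hne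
    by_cases hqt : (q, t) = (q', t')
    · obtain ⟨rfl, rfl⟩ := Prod.ext_iff.1 hqt
      cases b <;> cases b' <;> simp only [ne_eq, not_true_eq_false] at hne
      · exact (disjoint_burgessI_burgessJ hh1).symm
      · exact disjoint_burgessI_burgessJ hh1
    · have hHqX := hHq hqX
      have hHqX' := hHq hqX'
      exact burgess_disjoint_of_ne hh1 (by omega) (by omega) hcop hcop' hqt (by linarith)

theorem stmt11 (p : ℕ) (hp : p.Prime) (hodd : p ≠ 2)
    (H : ℝ) (hH0 : 0 < H) (hHp : H < p) (h : ℕ) (hh : 2 ≤ h)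
    (X : ℝ) (hX : X = H / h) (hX2 : 2 ≤ X) (hHX : 2 * H * X < p) :
    (∀ q t : ℕ, t < q → (q : ℝ) ≤ X → Nat.gcd t q = 1 →
        burgessI p h H q t ⊆ Set.Ico (-H) ((p : ℝ) - H) ∧
        burgessJ p h H q t ⊆ Set.Ico (-H) ((p : ℝ) - H)) ∧
      Set.PairwiseDisjoint
        {x : ℕ × ℕ × Bool | x.2.1 < x.1 ∧ (x.1 : ℝ) ≤ X ∧ Nat.gcd x.2.1 x.1 = 1}
        (fun x => if x.2.2 then burgessI p h H x.1 x.2.1 else burgessJ p h H x.1 x.2.1) :=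
  stmt11_general p H hH0 h hh X hHX
end

section
/- Let p be an odd prime, let e be an even divisor of p−1, and let p_1, …, p_s be the distinct primes dividing p−1 that do not divide e. Set δ = 1 − Σ_{i=1}^{s} 1/p_i and assume δ > 0. Let f(n) be the indicator function of primitive roots modulo p and θ(n) = φ(n)/n. Then for every integer n not divisible by p, f(n)/(δ·θ(e)) ≥ 1 + (1/δ)·Σ_{i=1}^{s} θ(p_i) · Σ_{d | e} (μ(p_i d)/φ(p_i d)) · Σ_{χ : ord(χ) = p_i d} χ(n) + Σ_{d | e, d > 1} (μ(d)/φ(d)) · Σ_{χ : ord(χ) = d} χ(n), where the innermost sums run over Dirichlet characters χ modulo p of exact multiplicative order p_i d (respectively d), and the left-hand inequality is between real numbers (the right-hand side is real). -/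
/-!
Write `u = (p - 1) / ord(n)` for the index of the subgroup generated by `n` in `(ℤ/p)ˣ`.
The characters with `χ ^ k = 1` are the annihilator of the `k`-th powers, so for `k ∣ p - 1`
orthogonality gives `∑_{χ^k = 1} χ(n) = k` if `k ∣ u` and `0` otherwise. By Möbius inversion,
`∑_{ord χ = d} χ(n) = (μ ∗ k·[k ∣ u])(d)` for `d ∣ p - 1`, so
`d ↦ μ(d)/φ(d) ∑_{ord χ = d} χ(n)` agrees with a multiplicative function supported on
squarefree `d`, and the sums over `d ∣ e` factor over the primes of `e`. The right-hand side
becomes `W (1 - t) / δ`, where `W = e/φ(e)` if `gcd(e, u) = 1` and `W = 0` otherwise, and `t`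
is the number of the `p_i` dividing `u`. A primitive root has `u = 1`, giving equality;
otherwise a prime factor of `u` forces `W = 0` or `t ≥ 1`.
-/

open Classical in
noncomputable def charOrderSum (p : ℕ) [NeZero p] (k : ℕ) (n : ℤ) : ℂ :=
  ∑ χ ∈ Finset.univ.filter (fun χ : DirichletCharacter ℂ p => orderOf χ = k),
    χ (n : ZMod p)

open Finset ArithmeticFunction
open scoped ArithmeticFunction.Moebius

namespace ArithmeticFunction

def totient : ArithmeticFunction ℕ := ⟨Nat.totient, Nat.totient_zero⟩

@[simp]
theorem totient_apply (n : ℕ) : totient n = n.totient := rfl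

theorem isMultiplicative_totient : IsMultiplicative totient :=
  ⟨Nat.totient_one, fun h => Nat.totient_mul h⟩

def idOnDivisors (R : Type*) [Semiring R] (u : ℕ) : ArithmeticFunction R :=
  ⟨fun k => if k ∣ u then (k : R) else 0, by simp⟩

variable {R : Type*}

@[simp]
theorem idOnDivisors_apply [Semiring R] (u k : ℕ) :
    idOnDivisors R u k = if k ∣ u then (k : R) else 0 := rfl

theorem isMultiplicative_idOnDivisors [Semiring R] (u : ℕ) :
    IsMultiplicative (idOnDivisors R u) := by
  refine ⟨by simp, fun {m n} hmn => ?_⟩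
  have hdvd : m * n ∣ u ↔ m ∣ u ∧ n ∣ u :=
    ⟨fun h => ⟨dvd_of_mul_right_dvd h, dvd_of_mul_left_dvd h⟩,
      fun h => hmn.mul_dvd_of_dvd_of_dvd h.1 h.2⟩
  simp only [idOnDivisors_apply, hdvd, Nat.cast_mul, ite_zero_mul_ite_zero, ite_and]

theorem moebius_mul_apply_prime [Ring R] {f : ArithmeticFunction R} (hf : IsMultiplicative f)
    {q : ℕ} (hq : q.Prime) : ((μ : ArithmeticFunction R) * f) q = f q - 1 := by
  rw [mul_apply, Nat.sum_divisorsAntidiagonal (fun a b => (μ : ArithmeticFunction R) a * f b),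
    hq.divisors, sum_pair hq.one_lt.ne, intCoe_apply, intCoe_apply, moebius_apply_one,
    moebius_apply_prime hq, Nat.div_one, Nat.div_self hq.pos, hf.map_one]
  simp only [Int.cast_one, Int.cast_neg, one_mul, mul_one]
  abel

theorem IsMultiplicative.sum_divisors_moebius_mul [CommRing R] {F : ArithmeticFunction R}
    (hF : IsMultiplicative F) {e : ℕ} (he : e ≠ 0) :
    ∑ d ∈ e.divisors, (μ d : R) * F d = ∏ q ∈ e.primeFactors, (1 - F q) := by
  have hμF : IsMultiplicative ((μ : ArithmeticFunction R).pmul F) :=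
    isMultiplicative_moebius.intCast.pmul hF
  rw [← sum_filter_of_ne (p := Squarefree) fun d _ hd => by
      by_contra hsq
      simp [moebius_eq_zero_of_not_squarefree hsq] at hd,
    Nat.sum_divisors_filter_squarefree he, Nat.factors_eq]
  simp_rw [sub_eq_add_neg, prod_one_add]
  refine sum_congr rfl fun T hT => ?_
  have hprod := hμF.map_prod_of_subset_primeFactors e T (mem_powerset.mp hT)
  simp only [pmul_apply, intCoe_apply] at hprod
  rw [Finset.prod_val, Function.id_def, hprod]
  refine prod_congr rfl fun q hq => ?_
  rw [moebius_apply_prime (Nat.prime_of_mem_primeFactors (mem_powerset.mp hT hq))]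
  simp

theorem IsMultiplicative.sum_divisors_moebius_mul_mul [CommRing R] {F : ArithmeticFunction R}
    (hF : IsMultiplicative F) {c e : ℕ} (hce : c.Coprime e) (he : e ≠ 0) :
    ∑ d ∈ e.divisors, (μ (c * d) : R) * F (c * d)
      = μ c * F c * ∏ q ∈ e.primeFactors, (1 - F q) := by
  rw [← hF.sum_divisors_moebius_mul he, mul_sum]
  refine sum_congr rfl fun d hd => ?_
  have hcd : c.Coprime d := hce.coprime_dvd_right (Nat.dvd_of_mem_divisors hd)
  rw [isMultiplicative_moebius.map_mul_of_coprime hcd, hF.map_mul_of_coprime hcd]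
  push_cast
  ring

end ArithmeticFunction

theorem IsCyclic.mem_range_powMonoidHom_iff {G : Type*} [CommGroup G] [Finite G] [IsCyclic G]
    {k : ℕ} (hk : k ∣ Nat.card G) (x : G) :
    x ∈ (powMonoidHom k : G →* G).range ↔ k ∣ Nat.card G / orderOf x := by
  have hrange : (powMonoidHom k : G →* G).range = (powMonoidHom (Nat.card G / k)).ker := by
    refine Subgroup.eq_of_le_of_card_ge ?_ ?_
    · rintro _ ⟨y, rfl⟩
      rw [MonoidHom.mem_ker, powMonoidHom_apply, powMonoidHom_apply, ← pow_mul,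
        Nat.mul_div_cancel' hk, pow_card_eq_one']
    · rw [IsCyclic.card_powMonoidHom_ker, IsCyclic.card_powMonoidHom_range,
        Nat.gcd_eq_right (Nat.div_dvd_of_dvd hk), Nat.gcd_eq_right hk]
  rw [hrange, MonoidHom.mem_ker, powMonoidHom_apply, ← orderOf_dvd_iff_pow_eq_one,
    Nat.dvd_div_iff_mul_dvd hk, Nat.dvd_div_iff_mul_dvd (orderOf_dvd_natCard x), mul_comm]

namespace MulChar

variable {M R : Type*} [CommMonoid M] [CommRing R]

theorem forall_mem_range_pow_eq_one_iff (χ : MulChar M R) (k : ℕ) :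
    (∀ m ∈ (powMonoidHom k : Mˣ →* Mˣ).range, χ m = 1) ↔ orderOf χ ∣ k := by
  simp only [MonoidHom.mem_range, forall_exists_index, forall_apply_eq_imp_iff, powMonoidHom_apply,
    Units.val_pow_eq_pow_val, map_pow, ← pow_apply_coe, orderOf_dvd_iff_pow_eq_one, eq_one_iff]

variable [Finite M] [IsDomain R] [HasEnoughRootsOfUnity R (Monoid.exponent Mˣ)]
  [Fintype (MulChar M R)]

open Classical in
theorem sum_filter_forall_mem_eq_one_apply (H : Subgroup Mˣ) (a : Mˣ) :
    ∑ χ : MulChar M R with ∀ m ∈ H, χ m = 1, χ a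
      = if a ∈ H then (H.index : R) else 0 := by
  set X := (subgroupOrderIsoSubgroupMulChar M R H).ofDual
  let ev : X →* R := (((mulCharEquiv M R).symm a : MulChar (MulChar M R) R) :
    MulChar M R →* R).comp X.subtype
  have hev : ev = 1 ↔ a ∈ H := by
    conv_rhs => rw [← (subgroupOrderIsoSubgroupMulChar M R).symm_apply_apply H]
    rw [← OrderDual.toDual_ofDual (subgroupOrderIsoSubgroupMulChar M R H),
      mem_subgroupOrderIsoSubgroupMulChar_symm_iff, DFunLike.ext_iff]
    simp [ev, X]
  have hcard : Fintype.card X = H.index := by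
    rw [← Nat.card_eq_fintype_card, card_subgroupOrderIsoSubgroupMulChar, Subgroup.index]
  have hsub : ∑ χ : MulChar M R with ∀ m ∈ H, χ m = 1, χ a = ∑ χ : X, ev χ := by
    rw [Finset.sum_subtype (p := (· ∈ X)) _ (fun χ => by simp [X])]
    exact Finset.sum_congr rfl fun χ _ => by simp [ev]
  rw [hsub, sum_hom_units ev]
  simp [hev, hcard]

variable [IsCyclic Mˣ]

theorem sum_filter_orderOf_dvd_apply {k : ℕ} (hk : k ∣ Nat.card Mˣ) (a : Mˣ) :
    ∑ χ : MulChar M R with orderOf χ ∣ k, χ a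
      = if k ∣ Nat.card Mˣ / orderOf a then (k : R) else 0 := by
  classical
  rw [filter_congr fun χ _ => (forall_mem_range_pow_eq_one_iff χ k).symm,
    sum_filter_forall_mem_eq_one_apply, IsCyclic.index_powMonoidHom_range, Nat.gcd_eq_right hk,
    IsCyclic.mem_range_powMonoidHom_iff hk]
  congr

theorem sum_filter_orderOf_eq_apply {d : ℕ} (hd : d ∣ Nat.card Mˣ) (a : Mˣ) :
    ∑ χ : MulChar M R with orderOf χ = d, χ a
      = ((μ : ArithmeticFunction R) * idOnDivisors R (Nat.card Mˣ / orderOf a)) d := by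
  have hinv := (sum_eq_iff_sum_mul_moebius_eq_on
    (f := fun i => ∑ χ : MulChar M R with orderOf χ = i, χ a)
    (g := idOnDivisors R (Nat.card Mˣ / orderOf a)) {m | m ∣ Nat.card Mˣ}
    (fun _ _ => dvd_trans)).mp (fun k hk hkN => ?_) d (Nat.pos_of_dvd_of_pos hd Nat.card_pos) hd
  · rw [ArithmeticFunction.mul_apply, ← hinv]
    simp [intCoe_apply]
  · rw [idOnDivisors_apply, ← sum_filter_orderOf_dvd_apply hkN a, sum_fiberwise_eq_sum_filter]
    exact sum_congr (filter_congr fun χ _ => by simp [hk.ne']) fun _ _ => rfl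

end MulChar

theorem prod_primeFactors_div_sub_one {e : ℕ} (he : e ≠ 0) :
    ∏ q ∈ e.primeFactors, ((q : ℝ) / (q - 1)) = e / e.totient := by
  have hφ : (e.totient : ℝ) ≠ 0 := by exact_mod_cast (Nat.totient_pos.mpr he.bot_lt).ne'
  have hsub : ∀ q ∈ e.primeFactors, ((q - 1 : ℕ) : ℝ) = q - 1 := fun q hq =>
    by rw [Nat.cast_sub (Nat.prime_of_mem_primeFactors hq).one_le, Nat.cast_one]
  have h := congrArg (Nat.cast : ℕ → ℝ) (Nat.totient_mul_prod_primeFactors e)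
  push_cast [prod_congr rfl hsub] at h
  rw [prod_div_distrib, div_eq_div_iff _ hφ, mul_comm, h]
  exact prod_ne_zero_iff.mpr fun q hq => sub_ne_zero.mpr
    (by exact_mod_cast (Nat.prime_of_mem_primeFactors hq).one_lt.ne')

namespace ArithmeticFunction

/-- For `u = (p - 1) / orderOf a` and `d ∣ p - 1`, this is the mean of `χ a` over the Dirichlet
characters `χ` modulo `p` of order `d`. -/
noncomputable def charMean (u : ℕ) : ArithmeticFunction ℂ :=
  ((μ : ArithmeticFunction ℂ) * idOnDivisors ℂ u).pdiv (totient : ArithmeticFunction ℂ)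

theorem isMultiplicative_charMean (u : ℕ) : IsMultiplicative (charMean u) :=
  (isMultiplicative_moebius.intCast.mul (isMultiplicative_idOnDivisors u)).pdiv
    isMultiplicative_totient.natCast

theorem charMean_apply_prime (u : ℕ) {q : ℕ} (hq : q.Prime) :
    charMean u q = ((if q ∣ u then (q : ℂ) else 0) - 1) / (q - 1) := by
  rw [charMean, pdiv_apply, moebius_mul_apply_prime (isMultiplicative_idOnDivisors u) hq,
    natCoe_apply, totient_apply, Nat.totient_prime hq, idOnDivisors_apply,
    Nat.cast_sub hq.one_le, Nat.cast_one]

theorem one_sub_charMean_apply_prime (u : ℕ) {q : ℕ} (hq : q.Prime) :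
    1 - charMean u q = ((if q ∣ u then 0 else q / (q - 1) : ℝ) : ℂ) := by
  have hq1 : (q : ℂ) - 1 ≠ 0 := sub_ne_zero.mpr (by exact_mod_cast hq.one_lt.ne')
  rw [charMean_apply_prime u hq]
  split_ifs <;> push_cast <;> field_simp <;> ring

theorem prod_one_sub_charMean {e : ℕ} (he : e ≠ 0) (u : ℕ) :
    ∏ q ∈ e.primeFactors, (1 - charMean u q)
      = ((if e.Coprime u then (e : ℝ) / e.totient else 0 : ℝ) : ℂ) := by
  rw [prod_congr rfl fun q hq =>
      one_sub_charMean_apply_prime u (Nat.prime_of_mem_primeFactors hq), ← Complex.ofReal_prod]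
  congr 1
  split_ifs with hcop
  · rw [← prod_primeFactors_div_sub_one he]
    exact prod_congr rfl fun q hq => if_neg fun hqu =>
      (Nat.prime_of_mem_primeFactors hq).one_lt.ne'
        (Nat.Coprime.eq_one_of_dvd (hcop.coprime_dvd_left (Nat.dvd_of_mem_primeFactors hq)) hqu)
  · obtain ⟨r, hr, hre, hru⟩ := Nat.Prime.not_coprime_iff_dvd.mp hcop
    exact prod_eq_zero (Nat.mem_primeFactors.mpr ⟨hr, hre, he⟩) (if_pos hru)

end ArithmeticFunction

theorem Nat.Prime.ne_zero_of_dvd_sub_one {p e : ℕ} (hp : p.Prime) (he : e ∣ p - 1) : e ≠ 0 :=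
  ne_zero_of_dvd_ne_zero (Nat.sub_ne_zero_of_lt hp.one_lt) he

section PrimitiveRoots

variable {p : ℕ} [Fact p.Prime] {n : ℤ} {a : (ZMod p)ˣ}

theorem moebius_div_totient_mul_charOrderSum (ha : (a : ZMod p) = n) {d : ℕ} (hd : d ∣ p - 1) :
    (μ d : ℂ) / d.totient * charOrderSum p d n = μ d * charMean ((p - 1) / orderOf a) d := by
  have hcard : Nat.card (ZMod p)ˣ = p - 1 := by rw [Nat.card_eq_fintype_card, ZMod.card_units]
  rw [charOrderSum, ← ha, ← hcard, MulChar.sum_filter_orderOf_eq_apply (hcard ▸ hd), charMean,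
    pdiv_apply, natCoe_apply, totient_apply]
  ring

theorem sum_divisors_moebius_div_totient_mul_charOrderSum (ha : (a : ZMod p) = n) {c e : ℕ}
    (hc : c ∣ p - 1) (he : e ∣ p - 1) (hce : c.Coprime e) :
    ∑ d ∈ e.divisors, (μ (c * d) : ℂ) / (c * d).totient * charOrderSum p (c * d) n
      = μ c * charMean ((p - 1) / orderOf a) c
        * ∏ q ∈ e.primeFactors, (1 - charMean ((p - 1) / orderOf a) q) := by
  have he0 : e ≠ 0 := (Fact.out : p.Prime).ne_zero_of_dvd_sub_one he
  rw [← (isMultiplicative_charMean _).sum_divisors_moebius_mul_mul hce he0]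
  exact sum_congr rfl fun d hd => moebius_div_totient_mul_charOrderSum ha
    ((hce.coprime_dvd_right (Nat.dvd_of_mem_divisors hd)).mul_dvd_of_dvd_of_dvd hc
      ((Nat.dvd_of_mem_divisors hd).trans he))

theorem sum_totient_div_mul_sum_charOrderSum (ha : (a : ZMod p) = n) {e : ℕ} (he : e ∣ p - 1)
    {P : Finset ℕ} (hP : ∀ q ∈ P, q.Prime ∧ q ∣ p - 1 ∧ ¬ q ∣ e) :
    ∑ q ∈ P, (q.totient : ℂ) / q *
        ∑ d ∈ e.divisors, (μ (q * d) : ℂ) / (q * d).totient * charOrderSum p (q * d) n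
      = (((∑ q ∈ P, (1 / (q : ℝ) - if q ∣ (p - 1) / orderOf a then 1 else 0))
          * if e.Coprime ((p - 1) / orderOf a) then (e : ℝ) / e.totient else 0 : ℝ) : ℂ) := by
  have he0 : e ≠ 0 := (Fact.out : p.Prime).ne_zero_of_dvd_sub_one he
  rw [Complex.ofReal_mul, Complex.ofReal_sum, sum_mul]
  refine sum_congr rfl fun q hq => ?_
  obtain ⟨hq, hqN, hqe⟩ := hP q hq
  have hq1 : (q : ℂ) - 1 ≠ 0 := sub_ne_zero.mpr (by exact_mod_cast hq.one_lt.ne')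
  have hq0 : (q : ℂ) ≠ 0 := by exact_mod_cast hq.ne_zero
  rw [sum_divisors_moebius_div_totient_mul_charOrderSum ha hqN he
    (hq.coprime_iff_not_dvd.mpr hqe), prod_one_sub_charMean he0, moebius_apply_prime hq,
    Nat.totient_prime hq, charMean_apply_prime _ hq, Nat.cast_sub hq.one_le]
  split_ifs <;> push_cast <;> field_simp <;> ring

theorem sum_filter_one_lt_charOrderSum (ha : (a : ZMod p) = n) {e : ℕ} (he : e ∣ p - 1) :
    ∑ d ∈ e.divisors.filter (1 < ·), (μ d : ℂ) / d.totient * charOrderSum p d n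
      = (((if e.Coprime ((p - 1) / orderOf a) then (e : ℝ) / e.totient else 0) - 1 : ℝ)
          : ℂ) := by
  have he0 : e ≠ 0 := (Fact.out : p.Prime).ne_zero_of_dvd_sub_one he
  have hfilter : e.divisors.filter (1 < ·) = e.divisors.erase 1 := by
    ext d
    simp only [mem_filter, mem_erase, Nat.mem_divisors]
    constructor
    · rintro ⟨hd, hd1⟩; exact ⟨hd1.ne', hd⟩
    · rintro ⟨hd1, hd⟩; exact ⟨hd, by have := Nat.pos_of_dvd_of_pos hd.1 he0.bot_lt; omega⟩
  have hsum := sum_divisors_moebius_div_totient_mul_charOrderSum ha (one_dvd _) he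
    (Nat.coprime_one_left e)
  simp only [one_mul, moebius_apply_one, (isMultiplicative_charMean _).map_one, Int.cast_one,
    prod_one_sub_charMean he0] at hsum
  rw [hfilter, sum_erase_eq_sub (Nat.one_mem_divisors.mpr he0), hsum,
    moebius_div_totient_mul_charOrderSum ha (one_dvd _), (isMultiplicative_charMean _).map_one,
    moebius_apply_one, Int.cast_one, one_mul, Complex.ofReal_sub, Complex.ofReal_one]

end PrimitiveRoots

theorem ite_coprime_mul_one_add_sum_le {N e u : ℕ} (hN : N ≠ 0) (hu : u ∣ N)
    (P : Finset ℕ) (hP : P = N.primeFactors.filter fun q => ¬ q ∣ e)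
    {δ : ℝ} (hδdef : δ = 1 - ∑ q ∈ P, (1 : ℝ) / q) (hδ : 0 < δ) :
    (if e.Coprime u then (e : ℝ) / e.totient else 0)
        * (1 + 1 / δ * ∑ q ∈ P, (1 / (q : ℝ) - if q ∣ u then 1 else 0))
      ≤ (if u = 1 then (1 : ℝ) else 0) / (δ * (e.totient / e)) := by
  have hS : ∑ q ∈ P, (1 / (q : ℝ) - if q ∣ u then 1 else 0)
      = 1 - δ - ∑ q ∈ P, if q ∣ u then (1 : ℝ) else 0 := by
    rw [sum_sub_distrib, hδdef]; ring
  rcases eq_or_ne u 1 with rfl | hu1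
  · have hsum : ∀ q ∈ P, (if q ∣ 1 then (1 : ℝ) else 0) = 0 := fun q hq => by
      rw [hP] at hq
      exact if_neg (Nat.prime_of_mem_primeFactors (mem_filter.mp hq).1).not_dvd_one
    have hδ' : 1 + 1 / δ * (1 - δ) = 1 / δ := by field_simp; ring
    rw [hS, sum_congr rfl hsum, sum_const_zero, sub_zero, hδ', if_pos (Nat.coprime_one_right e),
      if_pos rfl, one_div (δ * _), mul_inv, inv_div]
    apply le_of_eq
    ring
  · obtain ⟨r, hr, hru⟩ := Nat.exists_prime_and_dvd hu1
    rw [if_neg hu1, zero_div]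
    by_cases hre : r ∣ e
    · rw [if_neg (Nat.not_coprime_of_dvd_of_dvd hr.one_lt hre hru), zero_mul]
    · have hrP : r ∈ P := by
        rw [hP, mem_filter, Nat.mem_primeFactors]
        exact ⟨⟨hr, hru.trans hu, hN⟩, hre⟩
      have hcount : 1 ≤ ∑ q ∈ P, if q ∣ u then (1 : ℝ) else 0 := by
        calc (1 : ℝ) = if r ∣ u then 1 else 0 := (if_pos hru).symm
          _ ≤ _ := single_le_sum (f := fun q => if q ∣ u then (1 : ℝ) else 0)
            (fun q _ => by positivity) hrP
      refine mul_nonpos_of_nonneg_of_nonpos (by positivity) ?_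
      rw [hS, one_div_mul_eq_div]
      have hneg : (1 - δ - ∑ q ∈ P, if q ∣ u then (1 : ℝ) else 0) / δ ≤ -1 := by
        rw [div_le_iff₀ hδ]; linarith
      linarith

open Classical in
theorem stmt17_general (p : ℕ) (hp : p.Prime)
    (e : ℕ) (he : e ∣ p - 1)
    (P : Finset ℕ) (hP : P = (p - 1).primeFactors.filter fun q => ¬ q ∣ e)
    (δ : ℝ) (hδdef : δ = 1 - ∑ q ∈ P, (1 : ℝ) / q) (hδ : 0 < δ)
    (n : ℤ) (hn : ¬ (p : ℤ) ∣ n) :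
    (1 + (1 / (δ : ℂ)) *
          ∑ q ∈ P, ((q.totient : ℂ) / q) *
            ∑ d ∈ e.divisors,
              ((ArithmeticFunction.moebius (q * d) : ℂ) / ((q * d).totient)) *
                @charOrderSum p ⟨hp.ne_zero⟩ (q * d) n
        + ∑ d ∈ e.divisors.filter (1 < ·),
            ((ArithmeticFunction.moebius d : ℂ) / (d.totient)) *
              @charOrderSum p ⟨hp.ne_zero⟩ d n).re ≤
      (if orderOf ((n : ZMod p)) = p - 1 then (1 : ℝ) else 0) /
        (δ * ((e.totient : ℝ) / e)) := by
  have := Fact.mk hp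
  obtain ⟨a, ha⟩ : ∃ a : (ZMod p)ˣ, (a : ZMod p) = n :=
    ⟨Units.mk0 _ (by rwa [Ne, ZMod.intCast_zmod_eq_zero_iff_dvd]), rfl⟩
  have hPe : ∀ q ∈ P, q.Prime ∧ q ∣ p - 1 ∧ ¬ q ∣ e := fun q hq => by
    rw [hP, mem_filter, Nat.mem_primeFactors] at hq
    exact ⟨hq.1.1, hq.1.2.1, hq.2⟩
  have ha_dvd : orderOf a ∣ p - 1 := ZMod.orderOf_units_dvd_card_sub_one a
  have hprim : orderOf a = p - 1 ↔ (p - 1) / orderOf a = 1 := by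
    rw [Nat.div_eq_iff_eq_mul_left (orderOf_pos a) ha_dvd, one_mul, eq_comm]
  rw [sum_totient_div_mul_sum_charOrderSum ha he hPe, sum_filter_one_lt_charOrderSum ha he,
    show ∀ S W : ℝ, 1 + 1 / (δ : ℂ) * ((S * W : ℝ) : ℂ) + ((W - 1 : ℝ) : ℂ)
      = ((W * (1 + 1 / δ * S) : ℝ) : ℂ) from fun S W => by push_cast; ring,
    Complex.ofReal_re, ← ha, orderOf_units]
  simp only [hprim]
  exact ite_coprime_mul_one_add_sum_le (Nat.sub_ne_zero_of_lt hp.one_lt)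
    (Nat.div_dvd_of_dvd ha_dvd) P hP hδdef hδ

open Classical in
theorem stmt17 (p : ℕ) (hp : p.Prime) (hodd : p ≠ 2)
    (e : ℕ) (he : e ∣ p - 1) (he2 : 2 ∣ e)
    (P : Finset ℕ) (hP : P = (p - 1).primeFactors.filter fun q => ¬ q ∣ e)
    (s : ℕ) (hs : s = P.card)
    (δ : ℝ) (hδdef : δ = 1 - ∑ q ∈ P, (1 : ℝ) / q) (hδ : 0 < δ)
    (n : ℤ) (hn : ¬ (p : ℤ) ∣ n) :
    (1 + (1 / (δ : ℂ)) *
          ∑ q ∈ P, ((q.totient : ℂ) / q) *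
            ∑ d ∈ e.divisors,
              ((ArithmeticFunction.moebius (q * d) : ℂ) / ((q * d).totient)) *
                @charOrderSum p ⟨hp.ne_zero⟩ (q * d) n
        + ∑ d ∈ e.divisors.filter (1 < ·),
            ((ArithmeticFunction.moebius d : ℂ) / (d.totient)) *
              @charOrderSum p ⟨hp.ne_zero⟩ d n).re ≤
      (if orderOf ((n : ZMod p)) = p - 1 then (1 : ℝ) else 0) /
        (δ * ((e.totient : ℝ) / e)) :=
  stmt17_general p hp e he P hP δ hδdef hδ n hn
end
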